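/- For any abstract probabilistic event-clock automata E1 and E2 (over the same actions, after completing non-shared actions by point-distribution self-loops, with disjoint atomic-proposition sets), the region construction commutes with parallel composition up to mutual weak refinement: R(E1 ∥ E2) ≡ R(E1) ∥ R(E2), where ≡ denotes weak refinement in both directions. -/

import Mathlib

/- ----------------------------------------------------------------------
   Common definitions: (abstract) probabilistic timed automata, region
   automata, satisfaction, refinement, divergence, pruning, abstraction,
   event-clock automata, conjunction and parallel composition.

   Guards (clock constraints) are represented semantically, as sets of
   clock valuations; probability constraints are represented by their
   satisfaction sets (the paper does not fix a constraint language).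
   Regions are taken at the finest granularity (one valuation per
   region), so the region construction yields the (time-abstract)
   semantics of the automaton; the reset function ζ of a region label
   is merged into the target distribution (a PA over the alphabet
   Θ(X) × A × (2^X)^S is represented by the structure `RPA` below,
   whose transitions carry a region label and a distribution over
   reset-set/state pairs).
   ---------------------------------------------------------------------- -/

open scoped Classical
open scoped NNReal ENNReal

noncomputable section

/-- Clock valuations over the clock set `X`. -/
abbrev Val (X : Type) := X → ℝ≥0

def valZero (X : Type) : Val X := fun _ => 0

/-- Letting time `t` elapse. -/
def valShift {X : Type} (v : Val X) (t : ℝ≥0) : Val X := fun x => v x + t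

/-- Resetting the clocks in `Y` to zero. -/
def valReset {X : Type} (v : Val X) (Y : Set X) : Val X :=
  fun x => if x ∈ Y then 0 else v x

/-- Clock constraints (guards) over `X`, represented semantically. -/
abbrev Guard (X : Type) := Set (Val X)

/-- The computed negation of a guard: a set of guards whose joint
complement is the guard. -/
def Guard.negSet {X : Type} (g : Guard X) : Set (Guard X) := {gᶜ}

/-- The three-valued complete lattice `⊥ < ? < ⊤` of modalities. -/
inductive B3 : Type
  | bot
  | may
  | must
deriving DecidableEq

/-- Probabilistic timed automata. -/
structure PTA (L A X AP : Type) where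
  V : L → Set AP
  T : L → Guard X → A → PMF (Set X × L) → Prop
  init : L

/-- Abstract probabilistic timed automata: sets of admissible atomic
propositions, three-valued edges, probability constraints (represented
by their sets of satisfying distributions). -/
structure APTA (L A X AP : Type) where
  V : L → Set (Set AP)
  T : L → Guard X → A → Set (PMF (Set X × L)) → B3
  init : L

/-- Probabilistic automata over the alphabet `Θ(X) × A × (2^X)^S`,
with the reset function of each label merged into the transition's
distribution (which therefore ranges over reset-set/state pairs). -/
structure RPA (S A X AP : Type) where
  V : S → Set AP
  T : S → Val X → A → PMF (Set X × S) → Prop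
  init : S

/-- Abstract probabilistic automata over the alphabet
`Θ(X) × A × (2^X)^S` (see `RPA`). -/
structure RAPA (S A X AP : Type) where
  V : S → Set (Set AP)
  T : S → Val X → A → Set (PMF (Set X × S)) → B3
  init : S

/-! ### Region construction -/

/-- Region automaton of a PTA, before restricting to reachable states. -/
def PTA.regionPre {L A X AP : Type} (M : PTA L A X AP) : RPA (L × Val X) A X AP where
  init := (M.init, valZero X)
  V := fun s => M.V s.1
  T := fun s v a μ' => ∃ g μ t, M.T s.1 g a μ ∧ v = valShift s.2 t ∧ v ∈ g ∧
        μ' = μ.map (fun p => (p.1, (p.2, valReset v p.1)))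

/-- Reachability in an `RPA`. -/
inductive RPA.Reach {S A X AP : Type} (P : RPA S A X AP) : S → Prop
  | init : RPA.Reach P P.init
  | step {s : S} {v : Val X} {a : A} {μ : PMF (Set X × S)} {Y : Set X} {s' : S} :
      RPA.Reach P s → P.T s v a μ → μ (Y, s') ≠ 0 → RPA.Reach P s'

/-- The region PA `R(M)` of a PTA `M` (transitions restricted to
reachable sources). -/
def PTA.region {L A X AP : Type} (M : PTA L A X AP) : RPA (L × Val X) A X AP where
  init := M.regionPre.init
  V := M.regionPre.V
  T := fun s v a μ => M.regionPre.Reach s ∧ M.regionPre.T s v a μ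

/-- Lifting a probability constraint over `2^X × L` to region states. -/
def liftConstraint {X L : Type} (v : Val X) (φ : Set (PMF (Set X × L))) :
    Set (PMF (Set X × (L × Val X))) :=
  (fun μ => μ.map (fun p => (p.1, (p.2, valReset v p.1)))) '' φ

/-- Region APA of an APTA, before restricting to reachable states. -/
def APTA.regionPre {L A X AP : Type} (𝒜 : APTA L A X AP) : RAPA (L × Val X) A X AP where
  init := (𝒜.init, valZero X)
  V := fun s => 𝒜.V s.1
  T := fun s v a φ' =>
    if ∃ g φ t, 𝒜.T s.1 g a φ = B3.must ∧ v = valShift s.2 t ∧ v ∈ g ∧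
        φ' = liftConstraint v φ then B3.must
    else if ∃ g φ t, 𝒜.T s.1 g a φ ≠ B3.bot ∧ v = valShift s.2 t ∧ v ∈ g ∧
        φ' = liftConstraint v φ then B3.may
    else B3.bot

/-- Reachability in an `RAPA`. -/
inductive RAPA.Reach {S A X AP : Type} (N : RAPA S A X AP) : S → Prop
  | init : RAPA.Reach N N.init
  | step {s : S} {v : Val X} {a : A} {φ : Set (PMF (Set X × S))} {μ : PMF (Set X × S)}
      {Y : Set X} {s' : S} :
      RAPA.Reach N s → N.T s v a φ ≠ B3.bot → μ ∈ φ → μ (Y, s') ≠ 0 → RAPA.Reach N s'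

/-- The region APA `R(𝒜)` of an APTA `𝒜`. -/
def APTA.region {L A X AP : Type} (𝒜 : APTA L A X AP) : RAPA (L × Val X) A X AP where
  init := 𝒜.regionPre.init
  V := 𝒜.regionPre.V
  T := fun s v a φ => if 𝒜.regionPre.Reach s then 𝒜.regionPre.T s v a φ else B3.bot

/-- The operator `𝒯` interpreting a PA over the alphabet
`Θ(X) × A × (2^X)^S` as a PTA. -/
def RPA.toPTA {S A X AP : Type} (P : RPA S A X AP) : PTA S A X AP where
  init := P.init
  V := P.V
  T := fun s g a μ => ∃ v, g = {v} ∧ P.T s v a μ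

/-! ### Normal form -/

/-- The PTA `(𝒯 ∘ R)(M)` (fused). -/
def PTA.nf {L A X AP : Type} (M : PTA L A X AP) : PTA (L × Val X) A X AP where
  init := (M.init, valZero X)
  V := fun s => M.V s.1
  T := fun s g a μ' => ∃ g₀ μ t, M.T s.1 g₀ a μ ∧ valShift s.2 t ∈ g₀ ∧
        g = {valShift s.2 t} ∧
        μ' = μ.map (fun p => (p.1, (p.2, valReset (valShift s.2 t) p.1)))

/-- Reachability of locations in a PTA. -/
inductive PTA.ReachLoc {L A X AP : Type} (M : PTA L A X AP) : L → Prop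
  | init : PTA.ReachLoc M M.init
  | step {l : L} {g : Guard X} {a : A} {μ : PMF (Set X × L)} {Y : Set X} {l' : L} :
      PTA.ReachLoc M l → M.T l g a μ → μ (Y, l') ≠ 0 → PTA.ReachLoc M l'

/-- A PTA is in normal form iff it is isomorphic to the reachable part
of `(𝒯 ∘ R)(M)`. -/
def PTA.NormalForm {L A X AP : Type} (M : PTA L A X AP) : Prop :=
  ∃ e : L → L × Val X, Function.Injective e ∧
    (∀ s, M.nf.ReachLoc s ↔ s ∈ Set.range e) ∧
    e M.init = M.nf.init ∧
    (∀ l, M.V l = M.nf.V (e l)) ∧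
    (∀ l g a μ, M.T l g a μ ↔ M.nf.T (e l) g a (μ.map (Prod.map id e)))

/-! ### The lifting `⋐_R` of a relation to distributions -/

/-- `μ ⋐_R μ'`: lifting of `R` to distributions over reset-set/state
pairs, via a correspondence (weight) function. -/
def distLift {X S S' : Type} (R : S → S' → Prop)
    (μ : PMF (Set X × S)) (μ' : PMF (Set X × S')) : Prop :=
  ∃ δ : Set X × S → Set X × S' → ℝ≥0∞,
    (∀ p, μ p ≠ 0 → ∑' q, δ p q = 1) ∧
    (∀ q, μ' q = ∑' p, μ p * δ p q) ∧
    (∀ p q, δ p q ≠ 0 → p.1 = q.1 ∧ R p.2 q.2)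

/-- Lifting with a fixed correspondence function (used for strong
refinement). -/
def distLiftVia {X S S' : Type} (R : S → S' → Prop)
    (δ : Set X × S → Set X × S' → ℝ≥0∞)
    (μ : PMF (Set X × S)) (μ' : PMF (Set X × S')) : Prop :=
  (∀ q, μ' q = ∑' p, μ p * δ p q) ∧
  (∀ p q, δ p q ≠ 0 → p.1 = q.1 ∧ R p.2 q.2)

/-! ### APA satisfaction and refinement (at the region level) -/

/-- Satisfaction relation between a PA and an APA. -/
def RPA.SatRel {S S' A X AP : Type} (M : RPA S A X AP) (N : RAPA S' A X AP)
    (R : S → S' → Prop) : Prop :=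
  ∀ s s', R s s' →
    ((∀ v a φ', N.T s' v a φ' = B3.must →
        ∃ μ, M.T s v a μ ∧ ∃ μ' ∈ φ', distLift R μ μ') ∧
     (∀ v a μ, M.T s v a μ →
        ∃ φ', N.T s' v a φ' ≠ B3.bot ∧ ∃ μ' ∈ φ', distLift R μ μ') ∧
     M.V s ∈ N.V s')

/-- `M ⊨ N` for a PA `M` and an APA `N`. -/
def RPA.Sat {S S' A X AP : Type} (M : RPA S A X AP) (N : RAPA S' A X AP) : Prop :=
  ∃ R, M.SatRel N R ∧ R M.init N.init

/-- Weak refinement relation between APAs. -/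
def RAPA.WeakRefRel {S1 S2 A X AP : Type} (N1 : RAPA S1 A X AP) (N2 : RAPA S2 A X AP)
    (R : S1 → S2 → Prop) : Prop :=
  ∀ s1 s2, R s1 s2 →
    ((∀ v a φ2, N2.T s2 v a φ2 = B3.must →
        ∃ φ1, N1.T s1 v a φ1 = B3.must ∧ ∀ μ1 ∈ φ1, ∃ μ2 ∈ φ2, distLift R μ1 μ2) ∧
     (∀ v a φ1, N1.T s1 v a φ1 ≠ B3.bot →
        ∃ φ2, N2.T s2 v a φ2 ≠ B3.bot ∧ ∀ μ1 ∈ φ1, ∃ μ2 ∈ φ2, distLift R μ1 μ2) ∧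
     N1.V s1 ⊆ N2.V s2)

/-- Weak refinement `N1 ≼_W N2` of APAs. -/
def RAPA.WeakRef {S1 S2 A X AP : Type} (N1 : RAPA S1 A X AP) (N2 : RAPA S2 A X AP) : Prop :=
  ∃ R, N1.WeakRefRel N2 R ∧ R N1.init N2.init

/-- Strong refinement relation between APAs: the correspondence
function is fixed per pair of transitions, uniformly over all
distributions. -/
def RAPA.StrongRefRel {S1 S2 A X AP : Type} (N1 : RAPA S1 A X AP) (N2 : RAPA S2 A X AP)
    (R : S1 → S2 → Prop) : Prop :=
  ∀ s1 s2, R s1 s2 →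
    ((∀ v a φ2, N2.T s2 v a φ2 = B3.must →
        ∃ φ1, N1.T s1 v a φ1 = B3.must ∧
          ∃ δ, (∀ p, ∑' q, δ p q = 1) ∧
            ∀ μ1 ∈ φ1, ∃ μ2 ∈ φ2, distLiftVia R δ μ1 μ2) ∧
     (∀ v a φ1, N1.T s1 v a φ1 ≠ B3.bot →
        ∃ φ2, N2.T s2 v a φ2 ≠ B3.bot ∧
          ∃ δ, (∀ p, ∑' q, δ p q = 1) ∧
            ∀ μ1 ∈ φ1, ∃ μ2 ∈ φ2, distLiftVia R δ μ1 μ2) ∧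
     N1.V s1 ⊆ N2.V s2)

/-- Strong refinement `N1 ≼_S N2` of APAs. -/
def RAPA.StrongRef {S1 S2 A X AP : Type} (N1 : RAPA S1 A X AP) (N2 : RAPA S2 A X AP) : Prop :=
  ∃ R, N1.StrongRefRel N2 R ∧ R N1.init N2.init

/-- Mutual weak refinement `≡`. -/
def RAPA.Equiv {S1 S2 A X AP : Type} (N1 : RAPA S1 A X AP) (N2 : RAPA S2 A X AP) : Prop :=
  N1.WeakRef N2 ∧ N2.WeakRef N1

/-! ### APTA satisfaction and refinements -/

/-- Satisfaction relation between a PTA in normal form and an APTA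
(Def. "APTA Satisfaction"). -/
def APTA.SatRel {L L' A X AP : Type} (M : PTA L A X AP) (𝒜 : APTA L' A X AP)
    (R : L → L' → Prop) : Prop :=
  ∀ l l', R l l' →
    ((∀ (a : A) (φ' : Set (PMF (Set X × L'))) (g : Guard X) (θ : Val X),
        𝒜.T l' g a φ' = B3.must →
        M.regionPre.Reach (l, θ) → 𝒜.regionPre.Reach (l', θ) →
        ∃ (n : ℕ) (gs : Fin n → Guard X) (μs : Fin n → PMF (Set X × L)),
          (∀ t : ℝ≥0, valShift θ t ∈ g → ∃ i, valShift θ t ∈ gs i) ∧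
          (∀ i, M.T l (gs i) a (μs i) ∧ ∃ μ' ∈ φ', distLift R (μs i) μ')) ∧
     (∀ (a : A) (μ : PMF (Set X × L)) (g : Guard X),
        M.T l g a μ →
        ∃ (g' : Guard X) (φ' : Set (PMF (Set X × L'))),
          𝒜.T l' g' a φ' ≠ B3.bot ∧ g ⊆ g' ∧ ∃ μ' ∈ φ', distLift R μ μ') ∧
     M.V l ∈ 𝒜.V l')

/-- `M ⊨ 𝒜` for a PTA `M` and an APTA `𝒜`. -/
def APTA.Sat {L L' A X AP : Type} (M : PTA L A X AP) (𝒜 : APTA L' A X AP) : Prop :=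
  ∃ R, APTA.SatRel M 𝒜 R ∧ R M.init 𝒜.init

/-- An implementation of an APTA is a PTA in normal form satisfying it. -/
def APTA.Implements {L L' A X AP : Type} (M : PTA L A X AP) (𝒜 : APTA L' A X AP) : Prop :=
  M.NormalForm ∧ APTA.Sat M 𝒜

/-- Thorough refinement `𝒜1 ≼_T 𝒜2`: inclusion of implementation sets. -/
def APTA.Thorough {L1 L2 A X AP : Type} (𝒜1 : APTA L1 A X AP) (𝒜2 : APTA L2 A X AP) : Prop :=
  ∀ (L' : Type) (M : PTA L' A X AP), APTA.Implements M 𝒜1 → APTA.Implements M 𝒜2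

/-- Weak refinement `𝒜1 ≼_W 𝒜2` of APTAs: weak refinement of the region APAs. -/
def APTA.WeakRef {L1 L2 A X AP : Type} (𝒜1 : APTA L1 A X AP) (𝒜2 : APTA L2 A X AP) : Prop :=
  RAPA.WeakRef 𝒜1.region 𝒜2.region

/-- Strong refinement `𝒜1 ≼_S 𝒜2` of APTAs: strong refinement of the region APAs. -/
def APTA.StrongRef {L1 L2 A X AP : Type} (𝒜1 : APTA L1 A X AP) (𝒜2 : APTA L2 A X AP) : Prop :=
  RAPA.StrongRef 𝒜1.region 𝒜2.region

/-! ### Consistency and pruning -/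

/-- A location is consistent if its admissible labeling is nonempty and
all must-edges from it have satisfiable constraints. -/
def APTA.ConsistentLoc {L A X AP : Type} (𝒜 : APTA L A X AP) (l : L) : Prop :=
  𝒜.V l ≠ ∅ ∧ ∀ g a φ, 𝒜.T l g a φ = B3.must → φ.Nonempty

/-- Restricting a constraint to distributions that avoid inconsistent
locations. -/
def APTA.pruneConstraint {L A X AP : Type} (𝒜 : APTA L A X AP)
    (φ : Set (PMF (Set X × L))) : Set (PMF (Set X × L)) :=
  {μ ∈ φ | ∀ Y l', ¬ 𝒜.ConsistentLoc l' → μ (Y, l') = 0}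

/-- The pruning operator `β`. -/
def APTA.prune {L A X AP : Type} (𝒜 : APTA L A X AP) : APTA L A X AP where
  init := 𝒜.init
  V := fun l => if 𝒜.ConsistentLoc l then 𝒜.V l else ∅
  T := fun l g a φ' =>
    if 𝒜.ConsistentLoc l ∧ ∃ φ, 𝒜.T l g a φ = B3.must ∧ φ' = 𝒜.pruneConstraint φ
    then B3.must
    else if 𝒜.ConsistentLoc l ∧ ∃ φ, 𝒜.T l g a φ = B3.may ∧ φ' = 𝒜.pruneConstraint φ
    then B3.may
    else B3.bot

/-- `β*`: the fixpoint of `β`, reached after finitely many iterations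
(at most `|L| + 1`). -/
def APTA.pruneStar {L A X AP : Type} [Fintype L] (𝒜 : APTA L A X AP) : APTA L A X AP :=
  (fun B : APTA L A X AP => B.prune)^[Fintype.card L + 1] 𝒜

/-! ### Time divergence -/

/-- Infinite paths of a PTA. -/
structure PTA.InfPath {L A X AP : Type} (M : PTA L A X AP) where
  loc : ℕ → L
  val : ℕ → Val X
  del : ℕ → ℝ≥0
  init_loc : loc 0 = M.init
  init_val : val 0 = valZero X
  step : ∀ n, ∃ g a μ Y, M.T (loc n) g a μ ∧ valShift (val n) (del n) ∈ g ∧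
    μ (Y, loc (n + 1)) ≠ 0 ∧ val (n + 1) = valReset (valShift (val n) (del n)) Y

/-- Strict divergence: time diverges along every infinite path. -/
def PTA.StrictDivergent {L A X AP : Type} (M : PTA L A X AP) : Prop :=
  ∀ π : M.InfPath, ∀ c : ℝ≥0, ∃ n, c < ∑ i ∈ Finset.range n, π.del i

/-- Schedulers: given the history (configurations and delays) and the
current configuration, choose a delay and a probabilistic edge. -/
def Sched (L A X : Type) :=
  List ((L × Val X) × ℝ≥0) → (L × Val X) → ℝ≥0 × Guard X × A × PMF (Set X × L)

/-- A scheduler is valid if it always chooses an enabled edge of `M`. -/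
def ValidSched {L A X AP : Type} (M : PTA L A X AP) (σ : Sched L A X) : Prop :=
  ∀ h c, M.T c.1 (σ h c).2.1 (σ h c).2.2.1 (σ h c).2.2.2 ∧
    valShift c.2 (σ h c).1 ∈ (σ h c).2.1

/-- One scheduler step. -/
def schedStep {L A X : Type} (σ : Sched L A X)
    (x : List ((L × Val X) × ℝ≥0) × (L × Val X)) :
    PMF (List ((L × Val X) × ℝ≥0) × (L × Val X)) :=
  ((σ x.1 x.2).2.2.2).map fun p =>
    (x.1 ++ [(x.2, (σ x.1 x.2).1)], (p.2, valReset (valShift x.2.2 (σ x.1 x.2).1) p.1))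

/-- The distribution over histories after `n` scheduler steps. -/
def runPMF {L A X AP : Type} (M : PTA L A X AP) (σ : Sched L A X) :
    ℕ → PMF (List ((L × Val X) × ℝ≥0) × (L × Val X))
  | 0 => PMF.pure ([], (M.init, valZero X))
  | n + 1 => (runPMF M σ n).bind (schedStep σ)

/-- Total time elapsed along a history. -/
def elapsed {L X : Type} (h : List ((L × Val X) × ℝ≥0)) : ℝ≥0 :=
  (h.map Prod.snd).sum

/-- Probabilistic divergence: under every (valid) scheduler, time
diverges with probability 1; equivalently, for every bound `c` the
probability that at most `c` time units have elapsed after `n` steps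
tends to `0`. -/
def PTA.ProbDivergent {L A X AP : Type} (M : PTA L A X AP) : Prop :=
  ∀ σ : Sched L A X, ValidSched M σ → ∀ c : ℝ≥0,
    Filter.Tendsto (fun n => (runPMF M σ n).toOuterMeasure {x | elapsed x.1 ≤ c})
      Filter.atTop (nhds 0)

/-- Sd-thorough refinement: inclusion of the sets of strict divergent
implementations. -/
def APTA.ThoroughSd {L1 L2 A X AP : Type} (𝒜1 : APTA L1 A X AP) (𝒜2 : APTA L2 A X AP) : Prop :=
  ∀ (L' : Type) (M : PTA L' A X AP),
    (APTA.Implements M 𝒜1 ∧ M.StrictDivergent) → (APTA.Implements M 𝒜2 ∧ M.StrictDivergent)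

/-- Pd-thorough refinement: inclusion of the sets of probabilistic
divergent implementations. -/
def APTA.ThoroughPd {L1 L2 A X AP : Type} (𝒜1 : APTA L1 A X AP) (𝒜2 : APTA L2 A X AP) : Prop :=
  ∀ (L' : Type) (M : PTA L' A X AP),
    (APTA.Implements M 𝒜1 ∧ M.ProbDivergent) → (APTA.Implements M 𝒜2 ∧ M.ProbDivergent)

/-! ### PTAs as APTAs, and probabilistic time-abstracting bisimulation -/

/-- A PTA viewed as an APTA: only must-edges, point-valued labelings,
constraints with singleton satisfaction sets. -/
def PTA.toAPTA {L A X AP : Type} (M : PTA L A X AP) : APTA L A X AP where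
  init := M.init
  V := fun l => {M.V l}
  T := fun l g a φ => if ∃ μ, M.T l g a μ ∧ φ = {μ} then B3.must else B3.bot

/-- Disjoint union of two PTAs. -/
def PTA.sum {L1 L2 A X AP : Type} (M1 : PTA L1 A X AP) (M2 : PTA L2 A X AP) :
    PTA (L1 ⊕ L2) A X AP where
  init := Sum.inl M1.init
  V := Sum.elim M1.V M2.V
  T := fun l g a μ =>
    (∃ l1 μ1, l = Sum.inl l1 ∧ M1.T l1 g a μ1 ∧ μ = μ1.map (Prod.map id Sum.inl)) ∨
    (∃ l2 μ2, l = Sum.inr l2 ∧ M2.T l2 g a μ2 ∧ μ = μ2.map (Prod.map id Sum.inr))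

/-- A set of configurations is closed under an equivalence. -/
def EClosed {C : Type} (E : C → C → Prop) (s : Set C) : Prop :=
  ∀ x y, E x y → (x ∈ s ↔ y ∈ s)

/-- Probabilistic time-abstracting bisimulations on the configurations
of a PTA. -/
def PTA.IsBisim {L A X AP : Type} (M : PTA L A X AP)
    (E : (L × Val X) → (L × Val X) → Prop) : Prop :=
  Equivalence E ∧
  ∀ c c', E c c' →
    (M.V c.1 = M.V c'.1 ∧
     ∀ (g : Guard X) (a : A) (μ : PMF (Set X × L)) (t : ℝ≥0),
       M.T c.1 g a μ → valShift c.2 t ∈ g →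
       ∃ (g' : Guard X) (μ' : PMF (Set X × L)) (t' : ℝ≥0),
         M.T c'.1 g' a μ' ∧ valShift c'.2 t' ∈ g' ∧
         ∀ s : Set (L × Val X), EClosed E s →
           ((μ.map fun p => (p.2, valReset (valShift c.2 t) p.1)).toOuterMeasure s =
            (μ'.map fun p => (p.2, valReset (valShift c'.2 t') p.1)).toOuterMeasure s))

/-- `M1 ∼ M2`: probabilistic time-abstracting bisimilarity. -/
def PTA.Bisimilar {L1 L2 A X AP : Type} (M1 : PTA L1 A X AP) (M2 : PTA L2 A X AP) : Prop :=
  ∃ E, (M1.sum M2).IsBisim E ∧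
    E (Sum.inl M1.init, valZero X) (Sum.inr M2.init, valZero X)

/-! ### Determinism -/

/-- Action-determinism: transitions of a reachable region state on the
same action with different constraints have disjoint regions. -/
def APTA.ActionDet {L A X AP : Type} (𝒜 : APTA L A X AP) : Prop :=
  ∀ s v1 v2 a φ1 φ2, 𝒜.region.T s v1 a φ1 ≠ B3.bot → 𝒜.region.T s v2 a φ2 ≠ B3.bot →
    φ1 ≠ φ2 → v1 ≠ v2

/-- AP-determinism. -/
def APTA.APDet {L A X AP : Type} (𝒜 : APTA L A X AP) : Prop :=
  ∀ s v a φ, 𝒜.region.T s v a φ ≠ B3.bot →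
    ∀ μ' ∈ φ, ∀ μ'' ∈ φ, ∀ (Y' : Set X) s' (Y'' : Set X) s'', s' ≠ s'' →
      μ' (Y', s') ≠ 0 → μ'' (Y'', s'') ≠ 0 → 𝒜.region.V s' ∩ 𝒜.region.V s'' = ∅

def APTA.Deterministic {L A X AP : Type} (𝒜 : APTA L A X AP) : Prop :=
  𝒜.ActionDet ∧ 𝒜.APDet

/-! ### Abstraction for APTAs -/

/-- The common guard `g(l̃, a)` of the must-edges of all concretizations
of `l̃`. -/
def APTA.commonGuard {L Lt A X AP : Type} (𝒜 : APTA L A X AP) (α : L → Lt)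
    (lt : Lt) (a : A) : Guard X :=
  if ∀ l, α l = lt → ∃ g φ, 𝒜.T l g a φ = B3.must
  then ⋂₀ {g | ∃ l, α l = lt ∧ ∃ φ, 𝒜.T l g a φ = B3.must}
  else ∅

/-- The pre-processing `𝒫_α`: every must-edge is split along the common
guard and its computed negation. -/
def APTA.preprocess {L Lt A X AP : Type} (𝒜 : APTA L A X AP) (α : L → Lt) :
    APTA L A X AP where
  init := 𝒜.init
  V := 𝒜.V
  T := fun l g a φ =>
    if ∃ g₀, 𝒜.T l g₀ a φ = B3.must ∧
        (g = 𝒜.commonGuard α (α l) a ∨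
         ∃ g' ∈ Guard.negSet (𝒜.commonGuard α (α l) a), g = g₀ ∩ g')
    then B3.must
    else if 𝒜.T l g a φ = B3.may then B3.may
    else B3.bot

/-- APTA abstraction (applied to a pre-processed APTA). -/
def APTA.abstr {L Lt A X AP : Type} (𝒜 : APTA L A X AP) (α : L → Lt) :
    APTA Lt A X AP where
  init := α 𝒜.init
  V := fun lt => {P | ∃ l, α l = lt ∧ P ∈ 𝒜.V l}
  T := fun lt g a φt =>
    if g = 𝒜.commonGuard α lt a ∧
        φt = (fun μ => μ.map (Prod.map id α)) ''
          ⋃₀ {φ | ∃ l, α l = lt ∧ 𝒜.T l g a φ = B3.must}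
    then B3.must
    else if g ≠ 𝒜.commonGuard α lt a ∧ (∃ l φ, α l = lt ∧ 𝒜.T l g a φ ≠ B3.bot) ∧
        φt = (fun μ => μ.map (Prod.map id α)) ''
          ⋃₀ {φ | ∃ l, α l = lt ∧ 𝒜.T l g a φ ≠ B3.bot}
    then B3.may
    else B3.bot

/-- Pre-processing at the APA level. Since every transition of a region
APA is guarded by a single region, guard splitting is trivial there. -/
def RAPA.preprocess {S St A X AP : Type} (N : RAPA S A X AP) (_α : S → St) :
    RAPA S A X AP := N

/-- APA abstraction (cf. DKLLPSW11): must if all concretizations have a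
must-transition with the given label, may if some has a non-⊥ one. -/
def RAPA.abstr {S St A X AP : Type} (N : RAPA S A X AP) (α : S → St) :
    RAPA St A X AP where
  init := α N.init
  V := fun st => {P | ∃ s, α s = st ∧ P ∈ N.V s}
  T := fun st v a φt =>
    if (∀ s, α s = st → ∃ φ, N.T s v a φ = B3.must) ∧
        φt = (fun μ => μ.map (Prod.map id α)) ''
          ⋃₀ {φ | ∃ s, α s = st ∧ N.T s v a φ = B3.must}
    then B3.must
    else if ¬ (∀ s, α s = st → ∃ φ, N.T s v a φ = B3.must) ∧
        (∃ s φ, α s = st ∧ N.T s v a φ ≠ B3.bot) ∧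
        φt = (fun μ => μ.map (Prod.map id α)) ''
          ⋃₀ {φ | ∃ s, α s = st ∧ N.T s v a φ ≠ B3.bot}
    then B3.may
    else B3.bot

/-! ### Abstract probabilistic event-clock automata -/

/-- Abstract probabilistic event-clock automata: one clock `x_a` per
action `a` (so the clock set is identified with the action set `A`),
and probability constraints directly over locations. -/
structure APECA (L A AP : Type) where
  V : L → Set (Set AP)
  T : L → Guard A → A → Set (PMF L) → B3
  init : L

/-- Completeness of the edge function: for every location and action the
guards of the non-⊥ edges cover `true`. -/
def APECA.Complete {L A AP : Type} (E : APECA L A AP) : Prop :=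
  ∀ l a (v : Val A), ∃ g φ, E.T l g a φ ≠ B3.bot ∧ v ∈ g

/-- An APECA as an APTA: the occurrence of `a` resets exactly the clock
`x_a`. -/
def APECA.toAPTA {L A AP : Type} (E : APECA L A AP) : APTA L A A AP where
  init := E.init
  V := E.V
  T := fun l g a φh =>
    if ∃ φ, E.T l g a φ = B3.must ∧
        φh = (fun μ => μ.map fun l' => (({a} : Set A), l')) '' φ
    then B3.must
    else if ∃ φ, E.T l g a φ = B3.may ∧
        φh = (fun μ => μ.map fun l' => (({a} : Set A), l')) '' φ
    then B3.may
    else B3.bot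

/-- The region APA of an APECA. -/
def APECA.region {L A AP : Type} (E : APECA L A AP) : RAPA (L × Val A) A A AP :=
  E.toAPTA.region

/-- Weak refinement of APECAs: weak APA refinement of the region APAs. -/
def APECA.WeakRef {L1 L2 A AP : Type} (E1 : APECA L1 A AP) (E2 : APECA L2 A AP) : Prop :=
  RAPA.WeakRef E1.region E2.region

/-- Action-determinism for APECAs. -/
def APECA.ActionDet {L A AP : Type} (E : APECA L A AP) : Prop :=
  ∀ s v1 v2 a φ1 φ2, E.region.T s v1 a φ1 ≠ B3.bot → E.region.T s v2 a φ2 ≠ B3.bot →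
    φ1 ≠ φ2 → v1 ≠ v2

/-- Consistency: existence of at least one implementation. -/
def APECA.Consistent {L A AP : Type} (E : APECA L A AP) : Prop :=
  ∃ (L' : Type) (M : PTA L' A A AP), APTA.Implements M E.toAPTA

/-- Implementation of an APECA. -/
def APECA.Implements {L' L A AP : Type} (M : PTA L' A A AP) (E : APECA L A AP) : Prop :=
  APTA.Implements M E.toAPTA

/-- Disjointness of the atomic-proposition alphabets of two APECAs. -/
def APDisjoint {L1 L2 A AP : Type} (E1 : APECA L1 A AP) (E2 : APECA L2 A AP) : Prop :=
  ∀ l1 l2 P1 P2, P1 ∈ E1.V l1 → P2 ∈ E2.V l2 → P1 ∩ P2 = ∅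

/-! ### Conjunction -/

/-- The conjunction `φ∧` of two constraints: a distribution satisfies it
iff its marginals satisfy the component constraints. -/
def conjConstraint {L1 L2 : Type} (φ1 : Set (PMF L1)) (φ2 : Set (PMF L2)) :
    Set (PMF (L1 × L2)) :=
  {μ | μ.map Prod.fst ∈ φ1 ∧ μ.map Prod.snd ∈ φ2}

/-- Conjunction of APECAs. -/
def APECA.conj {L1 L2 A AP : Type} (E1 : APECA L1 A AP) (E2 : APECA L2 A AP) :
    APECA (L1 × L2) A AP where
  init := (E1.init, E2.init)
  V := fun p => E1.V p.1 ∩ E2.V p.2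
  T := fun p g a φ =>
    if ∃ g1 g2 φ1 φ2, E1.T p.1 g1 a φ1 ≠ B3.bot ∧ E2.T p.2 g2 a φ2 ≠ B3.bot ∧
        g = g1 ∩ g2 ∧ φ = conjConstraint φ1 φ2 ∧
        (E1.T p.1 g1 a φ1 = B3.must ∨ E2.T p.2 g2 a φ2 = B3.must)
    then B3.must
    else if ∃ g1 g2 φ1 φ2, E1.T p.1 g1 a φ1 ≠ B3.bot ∧ E2.T p.2 g2 a φ2 ≠ B3.bot ∧
        g = g1 ∩ g2 ∧ φ = conjConstraint φ1 φ2
    then B3.may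
    else B3.bot

/-- Conjunction of constraints at the region level (with reset sets). -/
def conjConstraintR {X S1 S2 : Type} (φ1 : Set (PMF (Set X × S1)))
    (φ2 : Set (PMF (Set X × S2))) : Set (PMF (Set X × (S1 × S2))) :=
  {μ | μ.map (fun p => (p.1, p.2.1)) ∈ φ1 ∧ μ.map (fun p => (p.1, p.2.2)) ∈ φ2}

/-- Conjunction of APAs (region level). -/
def RAPA.conj {S1 S2 A X AP : Type} (N1 : RAPA S1 A X AP) (N2 : RAPA S2 A X AP) :
    RAPA (S1 × S2) A X AP where
  init := (N1.init, N2.init)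
  V := fun p => N1.V p.1 ∩ N2.V p.2
  T := fun p v a φ =>
    if ∃ φ1 φ2, N1.T p.1 v a φ1 ≠ B3.bot ∧ N2.T p.2 v a φ2 ≠ B3.bot ∧
        φ = conjConstraintR φ1 φ2 ∧
        (N1.T p.1 v a φ1 = B3.must ∨ N2.T p.2 v a φ2 = B3.must)
    then B3.must
    else if ∃ φ1 φ2, N1.T p.1 v a φ1 ≠ B3.bot ∧ N2.T p.2 v a φ2 ≠ B3.bot ∧
        φ = conjConstraintR φ1 φ2
    then B3.may
    else B3.bot

/-! ### Pruning for APECAs -/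

def APECA.ConsistentLoc {L A AP : Type} (E : APECA L A AP) (l : L) : Prop :=
  E.V l ≠ ∅ ∧ ∀ g a φ, E.T l g a φ = B3.must → φ.Nonempty

def APECA.pruneConstraint {L A AP : Type} (E : APECA L A AP) (φ : Set (PMF L)) :
    Set (PMF L) :=
  {μ ∈ φ | ∀ l', ¬ E.ConsistentLoc l' → μ l' = 0}

def APECA.prune {L A AP : Type} (E : APECA L A AP) : APECA L A AP where
  init := E.init
  V := fun l => if E.ConsistentLoc l then E.V l else ∅
  T := fun l g a φ' =>
    if E.ConsistentLoc l ∧ ∃ φ, E.T l g a φ = B3.must ∧ φ' = E.pruneConstraint φ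
    then B3.must
    else if E.ConsistentLoc l ∧ ∃ φ, E.T l g a φ = B3.may ∧ φ' = E.pruneConstraint φ
    then B3.may
    else B3.bot

def APECA.pruneStar {L A AP : Type} [Fintype L] (E : APECA L A AP) : APECA L A AP :=
  (fun B : APECA L A AP => B.prune)^[Fintype.card L + 1] E

/-! ### Parallel composition -/

/-- The parallel constraint `φ∥`: product distributions of satisfying
pairs. -/
def parConstraint {L1 L2 : Type} (φ1 : Set (PMF L1)) (φ2 : Set (PMF L2)) :
    Set (PMF (L1 × L2)) :=
  {μ | ∃ μ1 ∈ φ1, ∃ μ2 ∈ φ2, ∀ k1 k2, μ (k1, k2) = μ1 k1 * μ2 k2}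

/-- Parallel composition of APECAs (over the same action set). -/
def APECA.par {L1 L2 A AP : Type} (E1 : APECA L1 A AP) (E2 : APECA L2 A AP) :
    APECA (L1 × L2) A AP where
  init := (E1.init, E2.init)
  V := fun p => {Q | ∃ P1 ∈ E1.V p.1, ∃ P2 ∈ E2.V p.2, Q = P1 ∪ P2}
  T := fun p g a φ =>
    if ∃ g1 g2 φ1 φ2, E1.T p.1 g1 a φ1 = B3.must ∧ E2.T p.2 g2 a φ2 = B3.must ∧
        g = g1 ∩ g2 ∧ φ = parConstraint φ1 φ2
    then B3.must
    else if ∃ g1 g2 φ1 φ2, E1.T p.1 g1 a φ1 ≠ B3.bot ∧ E2.T p.2 g2 a φ2 ≠ B3.bot ∧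
        g = g1 ∩ g2 ∧ φ = parConstraint φ1 φ2
    then B3.may
    else B3.bot

/-- Parallel constraint at the region level: products, with resets
combined by union. -/
def parConstraintR {X S1 S2 : Type} (φ1 : Set (PMF (Set X × S1)))
    (φ2 : Set (PMF (Set X × S2))) : Set (PMF (Set X × (S1 × S2))) :=
  {μ | ∃ μ1 ∈ φ1, ∃ μ2 ∈ φ2,
    μ = μ1.bind fun p => μ2.map fun q => (p.1 ∪ q.1, (p.2, q.2))}

/-- Parallel composition of APAs (region level). -/
def RAPA.par {S1 S2 A X AP : Type} (N1 : RAPA S1 A X AP) (N2 : RAPA S2 A X AP) :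
    RAPA (S1 × S2) A X AP where
  init := (N1.init, N2.init)
  V := fun p => {Q | ∃ P1 ∈ N1.V p.1, ∃ P2 ∈ N2.V p.2, Q = P1 ∪ P2}
  T := fun p v a φ =>
    if ∃ φ1 φ2, N1.T p.1 v a φ1 = B3.must ∧ N2.T p.2 v a φ2 = B3.must ∧
        φ = parConstraintR φ1 φ2
    then B3.must
    else if ∃ φ1 φ2, N1.T p.1 v a φ1 ≠ B3.bot ∧ N2.T p.2 v a φ2 ≠ B3.bot ∧
        φ = parConstraintR φ1 φ2
    then B3.may
    else B3.bot

/-! ### Abstraction for APECAs -/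

def APECA.commonGuard {L Lt A AP : Type} (E : APECA L A AP) (α : L → Lt)
    (lt : Lt) (a : A) : Guard A :=
  if ∀ l, α l = lt → ∃ g φ, E.T l g a φ = B3.must
  then ⋂₀ {g | ∃ l, α l = lt ∧ ∃ φ, E.T l g a φ = B3.must}
  else ∅

def APECA.preprocess {L Lt A AP : Type} (E : APECA L A AP) (α : L → Lt) :
    APECA L A AP where
  init := E.init
  V := E.V
  T := fun l g a φ =>
    if ∃ g₀, E.T l g₀ a φ = B3.must ∧
        (g = E.commonGuard α (α l) a ∨
         ∃ g' ∈ Guard.negSet (E.commonGuard α (α l) a), g = g₀ ∩ g')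
    then B3.must
    else if E.T l g a φ = B3.may then B3.may
    else B3.bot

def APECA.abstr {L Lt A AP : Type} (E : APECA L A AP) (α : L → Lt) :
    APECA Lt A AP where
  init := α E.init
  V := fun lt => {P | ∃ l, α l = lt ∧ P ∈ E.V l}
  T := fun lt g a φt =>
    if g = E.commonGuard α lt a ∧
        φt = (fun μ => μ.map α) '' ⋃₀ {φ | ∃ l, α l = lt ∧ E.T l g a φ = B3.must}
    then B3.must
    else if g ≠ E.commonGuard α lt a ∧ (∃ l φ, α l = lt ∧ E.T l g a φ ≠ B3.bot) ∧
        φt = (fun μ => μ.map α) '' ⋃₀ {φ | ∃ l, α l = lt ∧ E.T l g a φ ≠ B3.bot}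
    then B3.may
    else B3.bot

end

/-!
The state map `((l₁, l₂), θ) ↦ ((l₁, θ), (l₂, θ))` is injective and, on reachable states,
carries the transitions of `R(E1 ∥ E2)` exactly onto those of `R(E1) ∥ R(E2)`: on both sides a
step lets time `t` elapse from the shared valuation `θ`, takes an `a`-edge of each component
whose guard holds at `θ + t` (with the meet of the two modalities), resets `x_a`, and moves by a
product of distributions satisfying the two constraints. Lifting each distribution along the
state map, or back along a left inverse, then gives weak refinement in both directions. Since
region APAs only have transitions from reachable states, one also needs that both projections
of a reachable state of `R(E1 ∥ E2)` are reachable in `R(E1)` and `R(E2)`.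
-/

namespace PMF

variable {α β : Type*}

noncomputable def prod (p : PMF α) (q : PMF β) : PMF (α × β) :=
  p.bind fun a => q.map (Prod.mk a)

theorem prod_apply (p : PMF α) (q : PMF β) (x : α × β) : p.prod q x = p x.1 * q x.2 := by
  rw [prod, bind_apply, tsum_eq_single x.1]
  · rw [map_apply, tsum_eq_single x.2]
    · simp
    · intro b hb
      simp [Prod.ext_iff, Ne.symm hb]
  · intro a ha
    rw [map_apply, ENNReal.tsum_eq_zero.mpr, mul_zero]
    intro b
    simp [Prod.ext_iff, Ne.symm ha]

end PMF

-- No modality counts as reaching `⊥`, so the `AtLeast` characterisations below hold for all `m`.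
def B3.AtLeast : B3 → B3 → Prop
  | b, .must => b = .must
  | b, .may => b ≠ .bot
  | _, .bot => False

theorem B3.ne_bot_iff {b : B3} : b ≠ .bot ↔ b = .must ∨ b = .may := by
  cases b <;> simp

theorem B3.ite_atLeast_iff {P Q : Prop} [Decidable P] [Decidable Q] (m : B3) :
    (if P then B3.must else if Q then B3.may else B3.bot).AtLeast m ↔
      (m = .must ∧ P) ∨ (m = .may ∧ (P ∨ Q)) := by
  cases m <;> split_ifs <;> simp_all [B3.AtLeast]

theorem distLift_map_prodMap {X S S' : Type} {R : S → S' → Prop} (f : S → S')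
    (μ : PMF (Set X × S)) (h : ∀ p, μ p ≠ 0 → R p.2 (f p.2)) :
    distLift R μ (μ.map (Prod.map id f)) := by
  refine ⟨fun p q => if μ p = 0 then 0 else PMF.pure (Prod.map id f p) q,
    fun p hp => by simp only [hp, if_false]; exact PMF.tsum_coe _, fun q => ?_, fun p q hpq => ?_⟩
  · rw [← PMF.bind_pure_comp, PMF.bind_apply]
    refine tsum_congr fun p => ?_
    by_cases hp : μ p = 0 <;> simp [hp]
  · by_cases hp : μ p = 0
    · simp [hp] at hpq
    · obtain rfl : q = Prod.map id f p := by simpa [hp, PMF.pure_apply] using hpq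
      exact ⟨rfl, h p hp⟩

namespace RAPA

variable {S1 S2 A X AP : Type}

theorem par_T_atLeast_iff (N1 : RAPA S1 A X AP) (N2 : RAPA S2 A X AP) (p : S1 × S2)
    (v : Val X) (a : A) (φ : Set (PMF (Set X × (S1 × S2)))) (m : B3) :
    ((N1.par N2).T p v a φ).AtLeast m ↔
      ∃ φ1 φ2, (N1.T p.1 v a φ1).AtLeast m ∧ (N2.T p.2 v a φ2).AtLeast m ∧
        φ = parConstraintR φ1 φ2 := by
  rw [RAPA.par, B3.ite_atLeast_iff]
  cases m <;> simp only [B3.AtLeast, B3.ne_bot_iff] <;> aesop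

structure IsReachImage (N1 : RAPA S1 A X AP) (N2 : RAPA S2 A X AP) (f : S1 → S2) : Prop where
  init_eq : f N1.init = N2.init
  V_eq : ∀ s, N1.Reach s → N2.V (f s) = N1.V s
  T_atLeast_iff : ∀ s, N1.Reach s → ∀ v a φ m, (N2.T (f s) v a φ).AtLeast m ↔
    ∃ φ1, (N1.T s v a φ1).AtLeast m ∧ φ = (fun μ => μ.map (Prod.map id f)) '' φ1

namespace IsReachImage

variable {N1 : RAPA S1 A X AP} {N2 : RAPA S2 A X AP} {f : S1 → S2}

theorem weakRef (h : N1.IsReachImage N2 f) : N1.WeakRef N2 := by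
  refine ⟨fun s1 s2 => N1.Reach s1 ∧ s2 = f s1, ?_, Reach.init, h.init_eq.symm⟩
  rintro s _ ⟨hs, rfl⟩
  have lift : ∀ {v a φ} μ, N1.T s v a φ ≠ B3.bot → μ ∈ φ →
      distLift (fun s1 s2 => N1.Reach s1 ∧ s2 = f s1) μ (μ.map (Prod.map id f)) :=
    fun μ hT hμ => distLift_map_prodMap f μ fun _ hp => ⟨Reach.step hs hT hμ hp, rfl⟩
  refine ⟨fun v a φ2 hφ2 => ?_, fun v a φ1 hφ1 => ?_, (h.V_eq s hs).ge⟩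
  · obtain ⟨φ1, hφ1, rfl⟩ := (h.T_atLeast_iff s hs v a φ2 .must).mp hφ2
    have hT : N1.T s v a φ1 ≠ B3.bot := by simp [show N1.T s v a φ1 = .must from hφ1]
    exact ⟨φ1, hφ1, fun μ hμ => ⟨_, ⟨μ, hμ, rfl⟩, lift μ hT hμ⟩⟩
  · exact ⟨_, (h.T_atLeast_iff s hs v a _ .may).mpr ⟨φ1, hφ1, rfl⟩,
      fun μ hμ => ⟨_, ⟨μ, hμ, rfl⟩, lift μ hφ1 hμ⟩⟩

theorem weakRef_symm (h : N1.IsReachImage N2 f) (hf : f.Injective) : N2.WeakRef N1 := by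
  have : Nonempty S1 := ⟨N1.init⟩
  refine ⟨fun s2 s1 => N1.Reach s1 ∧ s2 = f s1, ?_, Reach.init, h.init_eq.symm⟩
  rintro _ s ⟨hs, rfl⟩
  have lift : ∀ {v a φ} μ, N1.T s v a φ ≠ B3.bot → μ ∈ φ →
      distLift (fun s2 s1 => N1.Reach s1 ∧ s2 = f s1) (μ.map (Prod.map id f)) μ := by
    intro v a φ μ hT hμ
    have hμ_eq : (μ.map (Prod.map id f)).map (Prod.map id (Function.invFun f)) = μ := by
      rw [PMF.map_comp, Prod.map_comp_map, Function.invFun_comp hf]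
      exact PMF.map_id μ
    conv => arg 3; rw [← hμ_eq]
    refine distLift_map_prodMap _ _ fun q hq => ?_
    obtain ⟨p, hp, rfl⟩ := (PMF.mem_support_map_iff _ _ _).mp ((PMF.mem_support_iff _ _).mpr hq)
    show N1.Reach (Function.invFun f (f p.2)) ∧ f p.2 = f (Function.invFun f (f p.2))
    rw [Function.leftInverse_invFun hf p.2]
    exact ⟨Reach.step hs hT hμ ((PMF.mem_support_iff _ _).mp hp), rfl⟩
  refine ⟨fun v a φ1 hφ1 => ?_, fun v a φ2 hφ2 => ?_, (h.V_eq s hs).le⟩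
  · have hT : N1.T s v a φ1 ≠ B3.bot := by simp [hφ1]
    exact ⟨_, (h.T_atLeast_iff s hs v a _ .must).mpr ⟨φ1, hφ1, rfl⟩,
      by rintro _ ⟨μ, hμ, rfl⟩; exact ⟨μ, hμ, lift μ hT hμ⟩⟩
  · obtain ⟨φ1, hφ1, rfl⟩ := (h.T_atLeast_iff s hs v a φ2 .may).mp hφ2
    exact ⟨φ1, hφ1, by rintro _ ⟨μ, hμ, rfl⟩; exact ⟨μ, hμ, lift μ hφ1 hμ⟩⟩

theorem equiv (h : N1.IsReachImage N2 f) (hf : f.Injective) : N1.Equiv N2 :=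
  ⟨h.weakRef, h.weakRef_symm hf⟩

end IsReachImage

end RAPA

namespace APTA

variable {L A X AP : Type} (𝒜 : APTA L A X AP)

theorem regionPre_T_atLeast_iff (s : L × Val X) (v : Val X) (a : A)
    (φ : Set (PMF (Set X × (L × Val X)))) (m : B3) :
    (𝒜.regionPre.T s v a φ).AtLeast m ↔
      ∃ g ψ t, (𝒜.T s.1 g a ψ).AtLeast m ∧ v = valShift s.2 t ∧ v ∈ g ∧
        φ = liftConstraint v ψ := by
  rw [APTA.regionPre, B3.ite_atLeast_iff]
  cases m <;> simp only [B3.AtLeast, B3.ne_bot_iff] <;> aesop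

theorem region_T_atLeast_iff (s : L × Val X) (v : Val X) (a : A)
    (φ : Set (PMF (Set X × (L × Val X)))) (m : B3) :
    (𝒜.region.T s v a φ).AtLeast m ↔
      𝒜.regionPre.Reach s ∧ (𝒜.regionPre.T s v a φ).AtLeast m := by
  by_cases hs : 𝒜.regionPre.Reach s <;> cases m <;> simp [APTA.region, hs, B3.AtLeast]

theorem region_reach_iff (s : L × Val X) : 𝒜.region.Reach s ↔ 𝒜.regionPre.Reach s := by
  constructor
  · intro hs
    induction hs with
    | init => exact .init
    | step _ hT hμ hY ih =>
      exact .step ih ((𝒜.region_T_atLeast_iff _ _ _ _ .may).mp hT).2 hμ hY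
  · intro hs
    induction hs with
    | init => exact .init
    | step hs' hT hμ hY ih =>
      exact .step ih ((𝒜.region_T_atLeast_iff _ _ _ _ .may).mpr ⟨hs', hT⟩) hμ hY

end APTA

def eventLift {L A : Type} (v : Val A) (a : A) (ψ : Set (PMF L)) :
    Set (PMF (Set A × (L × Val A))) :=
  (fun ν => ν.map fun l => (({a} : Set A), (l, valReset v {a}))) '' ψ

theorem liftConstraint_image_eq_eventLift {L A : Type} (v : Val A) (a : A) (ψ : Set (PMF L)) :
    liftConstraint v ((fun μ => μ.map fun l => (({a} : Set A), l)) '' ψ) = eventLift v a ψ := by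
  simp only [liftConstraint, eventLift, Set.image_image, PMF.map_comp]
  rfl

theorem parConstraint_eq_image2 {L1 L2 : Type} (ψ1 : Set (PMF L1)) (ψ2 : Set (PMF L2)) :
    parConstraint ψ1 ψ2 = Set.image2 PMF.prod ψ1 ψ2 := by
  ext μ
  constructor
  · rintro ⟨ν1, h1, ν2, h2, hμ⟩
    exact ⟨ν1, h1, ν2, h2,
      PMF.ext fun k => (PMF.prod_apply ν1 ν2 k).trans (hμ k.1 k.2).symm⟩
  · rintro ⟨ν1, h1, ν2, h2, rfl⟩
    exact ⟨ν1, h1, ν2, h2, fun k1 k2 => PMF.prod_apply ν1 ν2 (k1, k2)⟩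

def splitState {L1 L2 Θ : Type} (s : (L1 × L2) × Θ) : (L1 × Θ) × (L2 × Θ) :=
  ((s.1.1, s.2), (s.1.2, s.2))

theorem splitState_injective {L1 L2 Θ : Type} :
    (splitState : (L1 × L2) × Θ → (L1 × Θ) × (L2 × Θ)).Injective := by
  rintro ⟨⟨k1, k2⟩, θ⟩ ⟨⟨k1', k2'⟩, θ'⟩ h
  simp_all [splitState]

theorem parConstraintR_eq_image2 {X S1 S2 : Type} (φ1 : Set (PMF (Set X × S1)))
    (φ2 : Set (PMF (Set X × S2))) :
    parConstraintR φ1 φ2 = Set.image2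
      (fun μ1 μ2 => μ1.bind fun p => μ2.map fun q => (p.1 ∪ q.1, (p.2, q.2))) φ1 φ2 := by
  ext μ
  simp [parConstraintR, Set.image2, eq_comm]

theorem parConstraintR_eventLift {L1 L2 A : Type} (v : Val A) (a : A) (ψ1 : Set (PMF L1))
    (ψ2 : Set (PMF L2)) :
    parConstraintR (eventLift v a ψ1) (eventLift v a ψ2) =
      (fun μ => μ.map (Prod.map id splitState)) '' eventLift v a (parConstraint ψ1 ψ2) := by
  rw [parConstraintR_eq_image2, eventLift, eventLift, eventLift, parConstraint_eq_image2,
    Set.image2_image_left, Set.image2_image_right, Set.image_image, Set.image_image2]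
  refine Set.image2_congr fun ν1 _ ν2 _ => ?_
  simp [PMF.prod, PMF.map, PMF.bind_bind, PMF.pure_bind, splitState, Function.comp_def]

namespace APECA

variable {L A AP : Type}

def EnabledEdge (E : APECA L A AP) (m : B3) (l : L) (θ v : Val A) (a : A)
    (ψ : Set (PMF L)) : Prop :=
  ∃ g t, (E.T l g a ψ).AtLeast m ∧ v = valShift θ t ∧ v ∈ g

theorem toAPTA_T_atLeast_iff (E : APECA L A AP) (l : L) (g : Guard A) (a : A)
    (φ : Set (PMF (Set A × L))) (m : B3) :
    (E.toAPTA.T l g a φ).AtLeast m ↔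
      ∃ ψ, (E.T l g a ψ).AtLeast m ∧
        φ = (fun μ => μ.map fun l' => (({a} : Set A), l')) '' ψ := by
  rw [APECA.toAPTA, B3.ite_atLeast_iff]
  cases m <;> simp only [B3.AtLeast, B3.ne_bot_iff] <;> aesop

theorem regionPre_T_atLeast_iff (E : APECA L A AP) (s : L × Val A) (v : Val A) (a : A)
    (φ : Set (PMF (Set A × (L × Val A)))) (m : B3) :
    (E.toAPTA.regionPre.T s v a φ).AtLeast m ↔
      ∃ ψ, E.EnabledEdge m s.1 s.2 v a ψ ∧ φ = eventLift v a ψ := by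
  rw [APTA.regionPre_T_atLeast_iff]
  constructor
  · rintro ⟨g, _, t, hT, hv, hg, rfl⟩
    obtain ⟨ψ, hψ, rfl⟩ := (E.toAPTA_T_atLeast_iff _ _ _ _ m).mp hT
    exact ⟨ψ, ⟨g, t, hψ, hv, hg⟩, liftConstraint_image_eq_eventLift v a ψ⟩
  · rintro ⟨ψ, ⟨g, t, hψ, hv, hg⟩, rfl⟩
    exact ⟨g, _, t, (E.toAPTA_T_atLeast_iff _ _ _ _ m).mpr ⟨ψ, hψ, rfl⟩, hv, hg,
      (liftConstraint_image_eq_eventLift v a ψ).symm⟩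

theorem region_T_atLeast_iff (E : APECA L A AP) (s : L × Val A) (v : Val A) (a : A)
    (φ : Set (PMF (Set A × (L × Val A)))) (m : B3) :
    (E.region.T s v a φ).AtLeast m ↔
      E.toAPTA.regionPre.Reach s ∧
        ∃ ψ, E.EnabledEdge m s.1 s.2 v a ψ ∧ φ = eventLift v a ψ := by
  rw [APECA.region, APTA.region_T_atLeast_iff, regionPre_T_atLeast_iff]

theorem regionPre_reach_step (E : APECA L A AP) {l : L} {θ v : Val A} {a : A}
    {ψ : Set (PMF L)} {ν : PMF L} {k : L} (hl : E.toAPTA.regionPre.Reach (l, θ))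
    (he : E.EnabledEdge .may l θ v a ψ) (hν : ν ∈ ψ) (hk : ν k ≠ 0) :
    E.toAPTA.regionPre.Reach (k, valReset v {a}) := by
  refine .step hl ((E.regionPre_T_atLeast_iff _ _ _ _ .may).mpr ⟨ψ, he, rfl⟩)
    ⟨ν, hν, rfl⟩ (Y := {a}) ?_
  rw [← PMF.mem_support_iff, PMF.mem_support_map_iff]
  exact ⟨k, (PMF.mem_support_iff _ _).mpr hk, rfl⟩

variable {L1 L2 : Type} (E1 : APECA L1 A AP) (E2 : APECA L2 A AP)

theorem par_T_atLeast_iff (p : L1 × L2) (g : Guard A) (a : A) (ψ : Set (PMF (L1 × L2)))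
    (m : B3) :
    ((E1.par E2).T p g a ψ).AtLeast m ↔
      ∃ g1 g2 ψ1 ψ2, (E1.T p.1 g1 a ψ1).AtLeast m ∧ (E2.T p.2 g2 a ψ2).AtLeast m ∧
        g = g1 ∩ g2 ∧ ψ = parConstraint ψ1 ψ2 := by
  rw [APECA.par, B3.ite_atLeast_iff]
  cases m <;> simp only [B3.AtLeast, B3.ne_bot_iff] <;> aesop

theorem par_enabledEdge_iff (m : B3) (p : L1 × L2) (θ v : Val A) (a : A)
    (ψ : Set (PMF (L1 × L2))) :
    (E1.par E2).EnabledEdge m p θ v a ψ ↔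
      ∃ ψ1 ψ2, E1.EnabledEdge m p.1 θ v a ψ1 ∧ E2.EnabledEdge m p.2 θ v a ψ2 ∧
        ψ = parConstraint ψ1 ψ2 := by
  simp only [EnabledEdge, par_T_atLeast_iff]
  constructor
  · rintro ⟨_, t, ⟨g1, g2, ψ1, ψ2, h1, h2, rfl, rfl⟩, hv, hg1, hg2⟩
    exact ⟨ψ1, ψ2, ⟨g1, t, h1, hv, hg1⟩, ⟨g2, t, h2, hv, hg2⟩, rfl⟩
  · rintro ⟨ψ1, ψ2, ⟨g1, t, h1, hv, hg1⟩, ⟨g2, -, h2, -, hg2⟩, rfl⟩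
    exact ⟨g1 ∩ g2, t, ⟨g1, g2, ψ1, ψ2, h1, h2, rfl, rfl⟩, hv, hg1, hg2⟩

theorem par_regionPre_reach {s : (L1 × L2) × Val A} (hs : (E1.par E2).toAPTA.regionPre.Reach s) :
    E1.toAPTA.regionPre.Reach (s.1.1, s.2) ∧ E2.toAPTA.regionPre.Reach (s.1.2, s.2) := by
  induction hs with
  | init => exact ⟨.init, .init⟩
  | step _ hT hμ hY ih =>
    obtain ⟨ψ, he, rfl⟩ := ((E1.par E2).regionPre_T_atLeast_iff _ _ _ _ .may).mp hT
    obtain ⟨ψ1, ψ2, he1, he2, rfl⟩ := (E1.par_enabledEdge_iff E2 _ _ _ _ _ _).mp he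
    rw [eventLift, parConstraint_eq_image2] at hμ
    obtain ⟨_, ⟨ν1, hν1, ν2, hν2, rfl⟩, rfl⟩ := hμ
    rw [← PMF.mem_support_iff, PMF.mem_support_map_iff] at hY
    obtain ⟨k, hk, hks⟩ := hY
    rw [PMF.mem_support_iff, PMF.prod_apply, mul_ne_zero_iff] at hk
    cases hks
    exact ⟨E1.regionPre_reach_step ih.1 he1 hν1 hk.1,
      E2.regionPre_reach_step ih.2 he2 hν2 hk.2⟩

theorem region_par_isReachImage :
    (E1.par E2).region.IsReachImage (RAPA.par E1.region E2.region) splitState where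
  init_eq := rfl
  V_eq _ _ := rfl
  T_atLeast_iff s hs v a φ m := by
    have hs' := ((E1.par E2).toAPTA.region_reach_iff s).mp hs
    obtain ⟨hs1, hs2⟩ := E1.par_regionPre_reach E2 hs'
    simp only [RAPA.par_T_atLeast_iff, splitState, region_T_atLeast_iff, hs', hs1, hs2,
      true_and]
    constructor
    · rintro ⟨_, _, ⟨ψ1, e1, rfl⟩, ⟨ψ2, e2, rfl⟩, rfl⟩
      have e := (E1.par_enabledEdge_iff E2 _ _ _ _ _ _).mpr ⟨ψ1, ψ2, e1, e2, rfl⟩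
      exact ⟨_, ⟨_, e, rfl⟩, parConstraintR_eventLift v a ψ1 ψ2⟩
    · rintro ⟨_, ⟨ψ, e, rfl⟩, rfl⟩
      obtain ⟨ψ1, ψ2, e1, e2, rfl⟩ := (E1.par_enabledEdge_iff E2 _ _ _ _ _ _).mp e
      exact ⟨_, _, ⟨ψ1, e1, rfl⟩, ⟨ψ2, e2, rfl⟩,
        (parConstraintR_eventLift v a ψ1 ψ2).symm⟩

end APECA

theorem region_commutes_with_parallel_general {L1 L2 A AP : Type}
    (E1 : APECA L1 A AP) (E2 : APECA L2 A AP) :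
    RAPA.Equiv (E1.par E2).region (RAPA.par E1.region E2.region) :=
  (E1.region_par_isReachImage E2).equiv splitState_injective

/-- Lemma 3.  The region construction commutes with
parallel composition up to mutual weak refinement:
`R(E1 ∥ E2) ≡ R(E1) ∥ R(E2)`. -/
theorem region_commutes_with_parallel {L1 L2 A AP : Type}
    (E1 : APECA L1 A AP) (E2 : APECA L2 A AP)
    (hc1 : E1.Complete) (hc2 : E2.Complete)
    (hd : APDisjoint E1 E2) :
    RAPA.Equiv (E1.par E2).region (RAPA.par E1.region E2.region) :=
  region_commutes_with_parallel_general E1 E2
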